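/- Let F be a field, m ≥ 1, k ≥ 1, A : Matrix (Fin m) (Fin m × Fin m) F, g an invertible m×m matrix over F with h = g⁻¹, and B = g * A * (h ⊗ h). Then for all multi-indices i, j : Fin k → Fin m: trace(∏_{l=0}^{k-1} (B_{i l} * B_{j l})) = ∑_{p, q : Fin k → Fin m} (∏_{l} h (p l) (i l)) * (∏_{l} h (q l) (j l)) * trace(∏_{l=0}^{k-1} (A_{p l} * A_{q l})), where the products of matrices are taken in increasing order of l. Equivalently, the m^k × m^k matrix T̃r((B^t̄ B)^⊗̄k), indexed by pairs of multi-indices with entry trace(∏_l B_{i l} B_{j l}), equals ((g⁻¹)^⊗k)ᵗ · T̃r((A^t̄ A)^⊗̄k) · (g⁻¹)^⊗k. -/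

import Mathlib

/-!
Each block of `B = g * A * (h ⊗ₖ h)` is a conjugate `g * C a * h` of the combination
`C a = ∑ p, h p a • A_p` of blocks of `A`. Since `h = g⁻¹`, a product of such conjugates is the
conjugate of the product of the `C`'s, so its trace is unchanged; expanding that product
multilinearly in the factors gives the sum over multi-indices `p`, `q`.
-/

open Matrix Kronecker

/-- The `i`-th block of a matrix of structure constants. -/
def blk {F : Type*} {m : ℕ} (A : Matrix (Fin m) (Fin m × Fin m) F) (i : Fin m) :
    Matrix (Fin m) (Fin m) F := fun a b => A a (i, b)

section Blocks

variable {R : Type*} [CommSemiring R] {m : ℕ}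

lemma blk_mul_left (g : Matrix (Fin m) (Fin m) R) (A : Matrix (Fin m) (Fin m × Fin m) R)
    (i : Fin m) : blk (g * A) i = g * blk A i := rfl

lemma blk_mul_kronecker (A : Matrix (Fin m) (Fin m × Fin m) R) (h : Matrix (Fin m) (Fin m) R)
    (i : Fin m) : blk (A * (h ⊗ₖ h)) i = (∑ p, h p i • blk A p) * h := by
  ext a b
  simp only [blk, mul_apply, Matrix.sum_apply, Matrix.smul_apply, smul_eq_mul,
    kroneckerMap_apply, Fintype.sum_prod_type, Finset.sum_mul]
  rw [Finset.sum_comm]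
  exact Finset.sum_congr rfl fun p _ => Finset.sum_congr rfl fun c _ => by ring

end Blocks

section Conjugation

variable {M : Type*} [Monoid M] {g h : M}

lemma conj_mul_conj (hhg : h * g = 1) (x y : M) : g * x * h * (g * y * h) = g * (x * y) * h :=
  calc g * x * h * (g * y * h) = g * x * (h * g) * y * h := by simp only [mul_assoc]
    _ = g * (x * y) * h := by rw [hhg, mul_one]; simp only [mul_assoc]

lemma list_prod_map_conj (hgh : g * h = 1) (hhg : h * g = 1) :
    ∀ l : List M, (l.map fun x => g * x * h).prod = g * l.prod * h
  | [] => by simp [hgh]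
  | x :: l => by
    rw [List.map_cons, List.prod_cons, list_prod_map_conj hgh hhg l, List.prod_cons,
      conj_mul_conj hhg]

end Conjugation

section Expansion

variable {R S : Type*} [CommSemiring R] [Semiring S] [Algebra R S]

lemma list_prod_ofFn_sum_smul {k : ℕ} {κ : Type*} [Fintype κ]
    (c : Fin k → κ → R) (Y : Fin k → κ → S) :
    (List.ofFn fun l => ∑ r, c l r • Y l r).prod =
      ∑ r : Fin k → κ, (∏ l, c l (r l)) • (List.ofFn fun l => Y l (r l)).prod := by
  simp only [← MultilinearMap.mkPiAlgebraFin_apply (R := R), MultilinearMap.map_sum,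
    MultilinearMap.map_smul_univ]

lemma list_prod_ofFn_sum_smul_mul_sum_smul {k : ℕ} {ι : Type*} [Fintype ι]
    (a b : Fin k → ι → R) (X : ι → S) :
    (List.ofFn fun l => (∑ p, a l p • X p) * (∑ q, b l q • X q)).prod =
      ∑ p : Fin k → ι, ∑ q : Fin k → ι,
        ((∏ l, a l (p l)) * ∏ l, b l (q l)) • (List.ofFn fun l => X (p l) * X (q l)).prod := by
  have hpair : ∀ l, (∑ p, a l p • X p) * (∑ q, b l q • X q) =
      ∑ r : ι × ι, (a l r.1 * b l r.2) • (X r.1 * X r.2) := fun l => by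
    simp only [Finset.sum_mul_sum, Fintype.sum_prod_type, smul_mul_smul_comm]
  simp only [hpair, list_prod_ofFn_sum_smul]
  rw [← (Equiv.arrowProdEquivProdArrow (Fin k) (fun _ => ι) (fun _ => ι)).symm.sum_comp,
    Fintype.sum_prod_type]
  simp [Finset.prod_mul_distrib]

end Expansion

theorem stmt_4_general (F : Type*) [Field F] (m k : ℕ)
    (A : Matrix (Fin m) (Fin m × Fin m) F)
    (g h : Matrix (Fin m) (Fin m) F) (hg : IsUnit g) (hh : h = g⁻¹)
    (B : Matrix (Fin m) (Fin m × Fin m) F)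
    (hB : B = g * A * (h ⊗ₖ h)) :
    ∀ i j : Fin k → Fin m,
      ((List.ofFn fun l : Fin k => blk B (i l) * blk B (j l)).prod).trace =
        ∑ p : Fin k → Fin m, ∑ q : Fin k → Fin m,
          (∏ l : Fin k, h (p l) (i l)) * (∏ l : Fin k, h (q l) (j l)) *
            ((List.ofFn fun l : Fin k => blk A (p l) * blk A (q l)).prod).trace := by
  intro i j
  have hdet : IsUnit g.det := (isUnit_iff_isUnit_det g).mp hg
  have hgh : g * h = 1 := hh ▸ mul_nonsing_inv g hdet
  have hhg : h * g = 1 := hh ▸ nonsing_inv_mul g hdet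
  set C : Fin m → Matrix (Fin m) (Fin m) F := fun a => ∑ p, h p a • blk A p
  have hBC : ∀ a b, blk B a * blk B b = g * (C a * C b) * h := fun a b => by
    rw [hB, Matrix.mul_assoc, blk_mul_left, blk_mul_left, blk_mul_kronecker, blk_mul_kronecker,
      ← Matrix.mul_assoc g _ h, ← Matrix.mul_assoc g _ h, conj_mul_conj hhg]
  calc ((List.ofFn fun l => blk B (i l) * blk B (j l)).prod).trace
      = (((List.ofFn fun l => C (i l) * C (j l)).map (g * · * h)).prod).trace := by
        simp only [hBC, List.map_ofFn, Function.comp_def]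
    _ = ((List.ofFn fun l => C (i l) * C (j l)).prod).trace := by
        rw [list_prod_map_conj hgh hhg, trace_mul_cycle, hhg, Matrix.one_mul]
    _ = _ := by
        simp only [C, list_prod_ofFn_sum_smul_mul_sum_smul, trace_sum, trace_smul, smul_eq_mul]

theorem stmt_4 (F : Type*) [Field F] (m k : ℕ) (hm : 1 ≤ m) (hk : 1 ≤ k)
    (A : Matrix (Fin m) (Fin m × Fin m) F)
    (g h : Matrix (Fin m) (Fin m) F) (hg : IsUnit g) (hh : h = g⁻¹)
    (B : Matrix (Fin m) (Fin m × Fin m) F)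
    (hB : B = g * A * (h ⊗ₖ h)) :
    ∀ i j : Fin k → Fin m,
      ((List.ofFn fun l : Fin k => blk B (i l) * blk B (j l)).prod).trace =
        ∑ p : Fin k → Fin m, ∑ q : Fin k → Fin m,
          (∏ l : Fin k, h (p l) (i l)) * (∏ l : Fin k, h (q l) (j l)) *
            ((List.ofFn fun l : Fin k => blk A (p l) * blk A (q l)).prod).trace :=
  stmt_4_general F m k A g h hg hh B hB
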